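/- arXiv:2206.01569 — 2 statements merged into one kernel-verified Lean document; each statement's English description precedes it below -/
import Mathlib

section
/- Let G be a finitely generated pro-p group and let G = ⟨G(v) : v ∈ V⟩ where {G(v)} are the vertex groups of a finite reduced tree of pro-p groups with fundamental pro-p group G. Then any minimal subset V of vertices whose vertex groups generate G has at most d(G) elements, where d(G) is the minimal number of topological generators of G. -/
open scoped Topology

/-- A topological group is a pro-`p` group if it is compact, totally disconnected,
and every open normal subgroup has index a power of `p`. -/
def IsProPGroup (p : ℕ) (G : Type*) [Group G] [TopologicalSpace G] : Prop :=
  CompactSpace G ∧ TotallyDisconnectedSpace G ∧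
    ∀ U : Subgroup G, U.Normal → IsOpen (U : Set G) →
      ∃ n : ℕ, Nat.card (G ⧸ U) = p ^ n

/-- A subgroup topologically generates `G` if it is dense. -/
def TopGen {G : Type*} [Group G] [TopologicalSpace G] (H : Subgroup G) : Prop :=
  closure (H : Set G) = Set.univ

/-- `G` is topologically finitely generated. -/
def TopFG (G : Type*) [Group G] [TopologicalSpace G] : Prop :=
  ∃ S : Finset G, TopGen (Subgroup.closure (S : Set G))

/-- `d(G)`: the minimal number of topological generators of `G`. -/
noncomputable def dGen (G : Type*) [Group G] [TopologicalSpace G] : ℕ :=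
  sInf {n | ∃ S : Finset G, S.card = n ∧ TopGen (Subgroup.closure (S : Set G))}

/-- A finite (multi-)graph: finite sets of vertices and edges together with the
two endpoint maps. -/
structure FinGraph where
  V : Type
  E : Type
  [fV : Fintype V]
  [fE : Fintype E]
  d0 : E → V
  d1 : E → V

attribute [instance] FinGraph.fV FinGraph.fE

namespace FinGraph

/-- Adjacency relation of a finite graph. -/
def adj (Γ : FinGraph) (v w : Γ.V) : Prop :=
  ∃ e, (Γ.d0 e = v ∧ Γ.d1 e = w) ∨ (Γ.d0 e = w ∧ Γ.d1 e = v)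

/-- A finite graph is connected if any two vertices are joined by a path. -/
def Connected (Γ : FinGraph) : Prop :=
  ∀ v w : Γ.V, Relation.ReflTransGen Γ.adj v w

/-- A finite connected graph is a tree iff `#E + 1 = #V`. -/
def IsTree (Γ : FinGraph) : Prop :=
  Γ.Connected ∧ Fintype.card Γ.E + 1 = Fintype.card Γ.V

end FinGraph

/-- An (internal) decomposition of the pro-`p` group `G` as the fundamental
pro-`p` group of a finite graph of pro-`p` groups over the graph `Γ`:
closed vertex subgroups `Gv`, edge subgroups `Ge`, and stable letters `t` such
that `Ge e ≤ Gv (d₀ e)`, `(t e)⁻¹ (Ge e) (t e) ≤ Gv (d₁ e)`, the vertex groups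
together with the stable letters topologically generate `G`, and `G` has the
universal (presentation) property with respect to continuous maps into finite
`p`-groups. -/
structure GraphOfProPGroups (p : ℕ) (G : Type) [Group G] [TopologicalSpace G]
    (Γ : FinGraph) where
  Gv : Γ.V → Subgroup G
  Ge : Γ.E → Subgroup G
  t : Γ.E → G
  closedV : ∀ v, IsClosed ((Gv v : Set G))
  le0 : ∀ e, Ge e ≤ Gv (Γ.d0 e)
  conj1 : ∀ e, ∀ x ∈ Ge e, (t e)⁻¹ * x * t e ∈ Gv (Γ.d1 e)
  gen : TopGen ((⨆ v, Gv v) ⊔ Subgroup.closure (Set.range t))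
  univ : ∀ (H : Type) [Group H] [Finite H] [TopologicalSpace H] [DiscreteTopology H], IsPGroup p H →
    ∀ (φ : ∀ v, ↥(Gv v) →* H) (τ : Γ.E → H),
      (∀ (e : Γ.E) (x : G) (hx : x ∈ Ge e),
        φ (Γ.d0 e) ⟨x, le0 e hx⟩ =
          τ e * φ (Γ.d1 e) ⟨(t e)⁻¹ * x * t e, conj1 e x hx⟩ * (τ e)⁻¹) →
      ∃ ψ : G →* H, Continuous ψ ∧ (∀ v (x : ↥(Gv v)), ψ x = φ v x) ∧
        ∀ e, ψ (t e) = τ e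

namespace GraphOfProPGroups

variable {p : ℕ} {G : Type} [Group G] [TopologicalSpace G] {Γ : FinGraph}

/-- The graph of groups is reduced: for every non-loop edge neither boundary
monomorphism is onto. -/
def Reduced (D : GraphOfProPGroups p G Γ) : Prop :=
  ∀ e, Γ.d0 e ≠ Γ.d1 e →
    D.Ge e ≠ D.Gv (Γ.d0 e) ∧
      ((fun x => (D.t e)⁻¹ * x * D.t e) '' (D.Ge e : Set G)) ≠ (D.Gv (Γ.d1 e) : Set G)

/-- `x` fixes the edge of the standard pro-`p` tree represented by the pair
`q = (e, g)` (i.e. the coset `g·Ge e`), which happens iff `x ∈ g (Ge e) g⁻¹`. -/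
def EdgeFix (D : GraphOfProPGroups p G Γ) (x : G) (q : Γ.E × G) : Prop :=
  q.2⁻¹ * x * q.2 ∈ D.Ge q.1

/-- Two pairs represent the same edge of the standard pro-`p` tree. -/
def SameEdge (D : GraphOfProPGroups p G Γ) (q r : Γ.E × G) : Prop :=
  q.1 = r.1 ∧ q.2⁻¹ * r.2 ∈ D.Ge q.1

/-- Two pairs represent the same vertex of the standard pro-`p` tree. -/
def SameVertex (D : GraphOfProPGroups p G Γ) (a b : Γ.V × G) : Prop :=
  a.1 = b.1 ∧ a.2⁻¹ * b.2 ∈ D.Gv a.1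

/-- The two endpoints of the edge of the standard tree represented by `q`. -/
def Ends (D : GraphOfProPGroups p G Γ) (q : Γ.E × G) : Set (Γ.V × G) :=
  {(Γ.d0 q.1, q.2), (Γ.d1 q.1, q.2 * D.t q.1)}

/-- The edges represented by `q` and `r` share a vertex in the standard tree. -/
def AdjEdge (D : GraphOfProPGroups p G Γ) (q r : Γ.E × G) : Prop :=
  ∃ a ∈ D.Ends q, ∃ b ∈ D.Ends r, D.SameVertex a b

/-- A reduced (non-backtracking) edge path in the standard pro-`p` tree,
given by `n+1` consecutive pairwise-distinct adjacent edges; in a pro-`p` tree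
such a path is a geodesic of length `n+1`. -/
def IsEdgePath (D : GraphOfProPGroups p G Γ) {n : ℕ} (P : Fin (n + 1) → Γ.E × G) : Prop :=
  (∀ i : Fin n, D.AdjEdge (P i.castSucc) (P i.succ)) ∧
  (∀ i : Fin n, ¬ D.SameEdge (P i.castSucc) (P i.succ)) ∧
  (∀ i : Fin n, ¬ D.SameEdge (P i.succ) (P i.castSucc))

/-- The graph of groups is `k`-acylindrical: the pointwise stabilizer of every
geodesic of length `> k` in the standard pro-`p` tree is trivial. -/
def Acylindrical (D : GraphOfProPGroups p G Γ) (k : ℕ) : Prop :=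
  ∀ n : ℕ, k < n + 1 → ∀ P : Fin (n + 1) → Γ.E × G, D.IsEdgePath P →
    ∀ x : G, (∀ i, D.EdgeFix x (P i)) → x = 1

end GraphOfProPGroups

open Pointwise

/-- In a finite `p`-group, every proper subgroup is contained in a normal
subgroup of index `p`. -/
lemma aux_pgroup_coatom {p : ℕ} (hp : p.Prime) {Q : Type*} [Group Q] [Finite Q]
    (hQ : IsPGroup p Q) {K : Subgroup Q} (hK : K ≠ ⊤) :
    ∃ M : Subgroup Q, K ≤ M ∧ M.Normal ∧ Nat.card (Q ⧸ M) = p := by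
  haveI : Fact p.Prime := ⟨hp⟩
  obtain ⟨M, hM, hKM⟩ := (eq_top_or_exists_le_coatom K).resolve_left hK
  haveI : Group.IsNilpotent Q := hQ.isNilpotent
  haveI hMn : M.Normal :=
    Subgroup.NormalizerCondition.normal_of_coatom M (normalizerCondition_of_isNilpotent) hM
  have hpQ : IsPGroup p (Q ⧸ M) := hQ.to_quotient M
  have hnt : Nontrivial (Q ⧸ M) := by
    by_contra h
    rw [not_nontrivial_iff_subsingleton] at h
    refine hM.1 ?_
    rw [eq_top_iff]
    intro x _
    have : (QuotientGroup.mk' M) x = 1 := Subsingleton.elim _ _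
    exact (QuotientGroup.eq_one_iff x).mp this
  obtain ⟨n, hn⟩ := IsPGroup.iff_card.mp hpQ
  have hn0 : n ≠ 0 := by
    rintro rfl
    rw [pow_zero] at hn
    exact (Finite.one_lt_card (α := Q ⧸ M)).ne' hn
  have hdvd : p ∣ Nat.card (Q ⧸ M) := by
    rw [hn]
    exact dvd_pow_self p hn0
  obtain ⟨x, hx⟩ := exists_prime_orderOf_dvd_card' (G := Q ⧸ M) p hdvd
  have hx1 : x ≠ 1 := by
    intro h
    rw [h, orderOf_one] at hx
    exact hp.one_lt.ne hx
  -- the preimage of `zpowers x` is strictly bigger than `M`, hence is everything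
  obtain ⟨g, hg⟩ := QuotientGroup.mk'_surjective M x
  have hMB : M < Subgroup.comap (QuotientGroup.mk' M) (Subgroup.zpowers x) := by
    refine lt_of_le_of_ne (fun m hm => ?_) (fun h => ?_)
    · have : (QuotientGroup.mk' M) m = 1 := (QuotientGroup.eq_one_iff m).mpr hm
      simp only [Subgroup.mem_comap, this]
      exact one_mem _
    · have hgB : g ∈ Subgroup.comap (QuotientGroup.mk' M) (Subgroup.zpowers x) := by
        simp only [Subgroup.mem_comap, hg]
        exact Subgroup.mem_zpowers x
      rw [← h] at hgB
      exact hx1 (by rw [← hg]; exact (QuotientGroup.eq_one_iff g).mpr hgB)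
  have hBtop : Subgroup.comap (QuotientGroup.mk' M) (Subgroup.zpowers x) = ⊤ :=
    hM.2 _ hMB
  have hzt : Subgroup.zpowers x = ⊤ := by
    rw [eq_top_iff]
    intro y _
    obtain ⟨h, rfl⟩ := QuotientGroup.mk'_surjective M y
    have : h ∈ Subgroup.comap (QuotientGroup.mk' M) (Subgroup.zpowers x) := by
      rw [hBtop]; trivial
    exact this
  refine ⟨M, hKM, hMn, ?_⟩
  rw [← Subgroup.card_top (G := Q ⧸ M), ← hzt, Nat.card_zpowers, hx]

/-- In a pro-`p` group, every proper closed subgroup is contained in an open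
normal subgroup of index `p`. -/
lemma aux_prop_subgroup {p : ℕ} (hp : p.Prime) {G : Type} [Group G] [TopologicalSpace G]
    [IsTopologicalGroup G] (hG : IsProPGroup p G) {H : Subgroup G}
    (hHc : IsClosed (H : Set G)) (hH : (H : Set G) ≠ Set.univ) :
    ∃ N : Subgroup G, N.Normal ∧ IsOpen (N : Set G) ∧ H ≤ N ∧ Nat.card (G ⧸ N) = p := by
  obtain ⟨hcomp, htd, hquot⟩ := hG
  haveI := hcomp
  haveI := htd
  haveI : T2Space G := IsTopologicalGroup.t2Space_iff_one_closed.mpr isClosed_singleton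
  obtain ⟨g, hg⟩ := (Set.ne_univ_iff_exists_notMem _).mp hH
  set C : Set G := (fun h => h⁻¹ * g) '' (H : Set G) with hC
  have hCclosed : IsClosed C :=
    ((hHc.isCompact).image (by continuity)).isClosed
  have h1C : (1 : G) ∈ Cᶜ := by
    rintro ⟨h, hh, e⟩
    simp only [inv_mul_eq_one] at e
    exact hg (e ▸ hh)
  obtain ⟨W, hWclopen, h1W, hWC⟩ :=
    compact_exists_isClopen_in_isOpen hCclosed.isOpen_compl h1C
  obtain ⟨U, hU⟩ :=
    IsTopologicalGroup.exist_openNormalSubgroup_sub_clopen_nhds_of_one hWclopen h1W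
  have hgK : g ∉ H ⊔ U.toSubgroup := by
    intro hgK
    rw [← SetLike.mem_coe, Subgroup.mul_normal] at hgK
    obtain ⟨h, hh, u, hu, rfl⟩ := hgK
    refine hWC (hU hu) ?_
    exact ⟨h, hh, by group⟩
  obtain ⟨n, hn⟩ := hquot U.toSubgroup inferInstance U.toOpenSubgroup.isOpen
  haveI : Finite (G ⧸ U.toSubgroup) :=
    Subgroup.quotient_finite_of_isOpen _ U.toOpenSubgroup.isOpen
  have hPQ : IsPGroup p (G ⧸ U.toSubgroup) := IsPGroup.of_card hn
  set π := QuotientGroup.mk' U.toSubgroup with hπ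
  have hKtop : Subgroup.map π H ≠ ⊤ := by
    intro h
    have h2 := Subgroup.comap_map_eq (f := π) H
    rw [h, Subgroup.comap_top, QuotientGroup.ker_mk'] at h2
    exact hgK (h2 ▸ Subgroup.mem_top g)
  obtain ⟨M, hKM, hMn, hMcard⟩ := aux_pgroup_coatom hp hPQ hKtop
  have hUle : U.toSubgroup ≤ Subgroup.comap π M := by
    intro u hu
    simp only [Subgroup.mem_comap]
    have : π u = 1 := (QuotientGroup.eq_one_iff u).mpr hu
    rw [this]
    exact one_mem _
  haveI : (Subgroup.comap π M).Normal := hMn.comap π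
  refine ⟨Subgroup.comap π M, inferInstance,
    Subgroup.isOpen_mono hUle U.toOpenSubgroup.isOpen,
    (Subgroup.le_comap_map π H).trans (Subgroup.comap_mono hKM), ?_⟩
  have hmap : (Subgroup.comap π M).map π = M :=
    Subgroup.map_comap_eq_self_of_surjective (QuotientGroup.mk'_surjective _) M
  have e := QuotientGroup.quotientQuotientEquivQuotient U.toSubgroup
    (Subgroup.comap π M) hUle
  rw [← Nat.card_congr e.toEquiv]
  rw [show (Subgroup.comap π M).map (QuotientGroup.mk' U.toSubgroup) = M from hmap]
  exact hMcard

/-- Let `G = Π₁(𝒢, Γ)` be the fundamental pro-`p` group of a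
finite reduced tree of pro-`p` groups (all stable letters trivial), with `G`
finitely generated. Then any minimal subset `V ⊆ V(Γ)` whose vertex groups
topologically generate `G` has at most `d(G)` elements. -/
theorem minimal_vertex_set_card_le_d (p : ℕ) (hp : p.Prime)
    (G : Type) [Group G] [TopologicalSpace G] [IsTopologicalGroup G]
    (hG : IsProPGroup p G) (hfg : TopFG G)
    (Γ : FinGraph) (htree : Γ.IsTree) (D : GraphOfProPGroups p G Γ)
    (ht : ∀ e, D.t e = 1) (hred : D.Reduced)
    (V : Finset Γ.V)
    (hgen : TopGen (⨆ v ∈ V, D.Gv v))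
    (hmin : ∀ W : Finset Γ.V, W ⊂ V → ¬ TopGen (⨆ v ∈ W, D.Gv v)) :
    V.card ≤ dGen G := by
  classical
  haveI : Fact p.Prime := ⟨hp⟩
  haveI : NeZero p := ⟨hp.ne_zero⟩
  haveI : Fact (1 < p) := ⟨hp.one_lt⟩
  have hne : Set.Nonempty
      {n | ∃ S : Finset G, S.card = n ∧ TopGen (Subgroup.closure (S : Set G))} := by
    obtain ⟨S, hS⟩ := hfg
    exact ⟨S.card, S, rfl, hS⟩
  obtain ⟨S, hScard, hSgen⟩ :
      ∃ S : Finset G, S.card = dGen G ∧ TopGen (Subgroup.closure ((S : Set G))) :=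
    Nat.sInf_mem hne
  rw [← hScard]
  -- choose an open normal subgroup of index `p` avoiding the other vertex groups
  have key : ∀ v : {x // x ∈ V}, ∃ N : Subgroup G, N.Normal ∧ IsOpen (N : Set G) ∧
      (⨆ w ∈ V.erase v.1, D.Gv w) ≤ N ∧ Nat.card (G ⧸ N) = p := by
    rintro ⟨v, hv⟩
    have hne' : (((⨆ w ∈ V.erase v, D.Gv w).topologicalClosure : Subgroup G) : Set G)
        ≠ Set.univ := by
      rw [Subgroup.topologicalClosure_coe]
      exact hmin (V.erase v) (Finset.erase_ssubset hv)
    obtain ⟨N, h1, h2, h3, h4⟩ := aux_prop_subgroup hp hG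
      (Subgroup.isClosed_topologicalClosure _) hne'
    exact ⟨N, h1, h2, (Subgroup.le_topologicalClosure _).trans h3, h4⟩
  choose N hNnorm hNopen hNle hNcard using key
  haveI : ∀ v, (N v).Normal := hNnorm
  haveI hfin : ∀ v, Finite (G ⧸ N v) := fun v =>
    Nat.finite_of_card_ne_zero (by rw [hNcard v]; exact hp.pos.ne')
  haveI : ∀ v, DiscreteTopology (G ⧸ N v) := fun v => QuotientGroup.discreteTopology (hNopen v)
  have hcyc : ∀ v, IsCyclic (G ⧸ N v) := fun v => isCyclic_of_prime_card (hNcard v)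
  have hiso : ∀ v : {x // x ∈ V}, ∃ _e : (G ⧸ N v) ≃* Multiplicative (ZMod p), True := by
    intro v
    refine ⟨?_, trivial⟩
    have := (zmodCyclicMulEquiv (hcyc v)).symm
    rw [hNcard v] at this
    exact this
  choose e _he using hiso
  letI : TopologicalSpace (Multiplicative (ZMod p)) := ⊥
  haveI : DiscreteTopology (Multiplicative (ZMod p)) := ⟨rfl⟩
  let Ψ : G →* ({x // x ∈ V} → Multiplicative (ZMod p)) :=
    Pi.monoidHom fun v => (e v).toMonoidHom.comp (QuotientGroup.mk' (N v))
  have hΨapp : ∀ (g : G) (w), Ψ g w = e w ((QuotientGroup.mk' (N w)) g) := fun _ _ => rfl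
  have hΨcont : Continuous Ψ := by
    apply continuous_pi
    intro v
    exact continuous_of_discreteTopology.comp continuous_quotient_mk'
  have hGvN : ∀ (v w : {x // x ∈ V}), w ≠ v → D.Gv w.1 ≤ N v := by
    rintro v ⟨w, hw⟩ hne'
    refine le_trans ?_ (hNle v)
    exact le_biSup (fun u => D.Gv u)
      (Finset.mem_erase.mpr ⟨fun h => hne' (Subtype.ext h), hw⟩)
  -- each coordinate line lies in the range of Ψ
  have hline : ∀ (v : {x // x ∈ V}) (x : Multiplicative (ZMod p)),
      Pi.mulSingle v x ∈ Ψ.range := by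
    intro v x
    obtain ⟨g, hgx⟩ := QuotientGroup.mk'_surjective (N v) ((e v).symm x)
    have htop : D.Gv v.1 ⊔ N v = ⊤ := by
      have hopen : IsOpen ((D.Gv v.1 ⊔ N v : Subgroup G) : Set G) :=
        Subgroup.isOpen_mono le_sup_right (hNopen v)
      have hcl := Subgroup.isClosed_of_isOpen _ hopen
      have hle2 : (⨆ w ∈ V, D.Gv w) ≤ D.Gv v.1 ⊔ N v := by
        refine iSup₂_le fun w hw => ?_
        by_cases hwv : w = v.1
        · exact hwv ▸ le_sup_left
        · exact le_trans (le_trans (le_biSup _ (Finset.mem_erase.mpr ⟨hwv, hw⟩))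
            (hNle v)) le_sup_right
      have hgen' : closure (((⨆ w ∈ V, D.Gv w) : Subgroup G) : Set G) = Set.univ := hgen
      have hsub : (Set.univ : Set G) ⊆ ((D.Gv v.1 ⊔ N v : Subgroup G) : Set G) := by
        rw [← hgen']
        exact closure_minimal (SetLike.coe_subset_coe.mpr hle2) hcl
      rw [eq_top_iff]
      intro y _
      exact hsub (Set.mem_univ y)
    have hgmem : g ∈ (D.Gv v.1 : Set G) * (N v : Set G) := by
      rw [← Subgroup.mul_normal, htop]
      trivial
    obtain ⟨a, ha, u, hu, rfl⟩ := hgmem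
    have hmk : (QuotientGroup.mk' (N v)) a = (e v).symm x := by
      have h2 : (QuotientGroup.mk' (N v)) u = 1 := (QuotientGroup.eq_one_iff u).mpr hu
      rw [← hgx, map_mul, h2, mul_one]
    refine ⟨a, ?_⟩
    funext w
    by_cases hwv : w = v
    · subst hwv
      rw [hΨapp, hmk, MulEquiv.apply_symm_apply, Pi.mulSingle_eq_same]
    · have haN : a ∈ N w := hGvN w v (Ne.symm hwv) ha
      have h3 : (QuotientGroup.mk' (N w)) a = 1 := (QuotientGroup.eq_one_iff a).mpr haN
      rw [hΨapp, h3, map_one, Pi.mulSingle_eq_of_ne hwv]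
  have hΨsurj : Function.Surjective Ψ := by
    intro a
    have hmem : a ∈ Ψ.range := by
      have ha : a = ∏ v : {x // x ∈ V}, Pi.mulSingle v (a v) :=
        (Finset.univ_prod_mulSingle a).symm
      rw [ha]
      exact Subgroup.prod_mem _ fun v _ => hline v (a v)
    exact hmem
  -- the image of S generates the target
  have hgenA : Subgroup.closure (⇑Ψ '' (S : Set G)) = ⊤ := by
    have hle3 : Subgroup.closure (S : Set G) ≤
        Subgroup.comap Ψ (Subgroup.closure (⇑Ψ '' (S : Set G))) :=
      (Subgroup.closure_le _).mpr fun s hs => Subgroup.subset_closure ⟨s, hs, rfl⟩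
    have hclosed3 : IsClosed (⇑Ψ ⁻¹'
        ((Subgroup.closure (⇑Ψ '' (S : Set G)) : Subgroup _) : Set _)) :=
      (isClosed_discrete _).preimage hΨcont
    have hSgen' : closure ((Subgroup.closure (S : Set G) : Subgroup G) : Set G) = Set.univ :=
      hSgen
    have huniv : (Set.univ : Set G) ⊆ ⇑Ψ ⁻¹'
        ((Subgroup.closure (⇑Ψ '' (S : Set G)) : Subgroup _) : Set _) := by
      rw [← hSgen']
      refine closure_minimal ?_ hclosed3
      intro y hy
      exact hle3 hy
    rw [eq_top_iff]
    rintro a -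
    obtain ⟨g, rfl⟩ := hΨsurj a
    exact huniv (Set.mem_univ g)
  -- exponent p
  have hppow : ∀ a : Multiplicative (ZMod p), a ^ p = 1 := by
    intro a
    have h1 : Multiplicative.toAdd (a ^ p) = Multiplicative.toAdd (1 : Multiplicative (ZMod p)) := by
      rw [toAdd_pow, nsmul_eq_mul, ZMod.natCast_self, zero_mul, toAdd_one]
    exact Multiplicative.toAdd.injective h1
  -- the counting homomorphism
  let φ : Multiplicative ({x // x ∈ S} → ZMod p) →* ({x // x ∈ V} → Multiplicative (ZMod p)) :=
    { toFun := fun c => ∏ s : {x // x ∈ S}, Ψ s.1 ^ ((Multiplicative.toAdd c) s).val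
      map_one' := by
        simp only [toAdd_one, Pi.zero_apply, ZMod.val_zero, pow_zero]
        exact Finset.prod_const_one
      map_mul' := fun c c' => by
        rw [← Finset.prod_mul_distrib]
        refine Finset.prod_congr rfl fun s _ => ?_
        have h1 : (Ψ s.1) ^ p = 1 := funext fun w => hppow (Ψ s.1 w)
        rw [toAdd_mul, Pi.add_apply, ZMod.val_add, ← pow_eq_pow_mod _ h1, pow_add] }
  have hsub4 : Subgroup.closure (⇑Ψ '' (S : Set G)) ≤ φ.range := by
    rw [Subgroup.closure_le]
    rintro _ ⟨s, hs, rfl⟩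
    set c : {x // x ∈ S} → ZMod p := Pi.single (⟨s, hs⟩ : {x // x ∈ S}) (1 : ZMod p) with hcdef
    refine ⟨Multiplicative.ofAdd c, ?_⟩
    show (∏ t : {x // x ∈ S},
      Ψ t.1 ^ ((Multiplicative.toAdd (Multiplicative.ofAdd c)) t).val) = Ψ s
    rw [toAdd_ofAdd, hcdef]
    rw [Fintype.prod_eq_single (⟨s, hs⟩ : {x // x ∈ S})
      (fun t ht => by rw [Pi.single_eq_of_ne ht, ZMod.val_zero, pow_zero])]
    rw [Pi.single_eq_same, ZMod.val_one, pow_one]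
  have hφsurj : Function.Surjective φ := by
    intro a
    have : a ∈ φ.range := hsub4 (by rw [hgenA]; trivial)
    exact this
  have hcard1 : Nat.card ({x // x ∈ V} → Multiplicative (ZMod p)) ≤ p ^ S.card := by
    refine le_trans (Nat.card_le_card_of_surjective φ hφsurj) (le_of_eq ?_)
    rw [Nat.card_congr Multiplicative.toAdd, Nat.card_pi]
    simp [Nat.card_zmod, Finset.prod_const, Finset.card_univ, Fintype.card_coe]
  have hcard2 : Nat.card ({x // x ∈ V} → Multiplicative (ZMod p)) = p ^ V.card := by
    rw [Nat.card_pi]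
    have : ∀ v : {x // x ∈ V}, Nat.card (Multiplicative (ZMod p)) = p := fun v => by
      rw [Nat.card_congr Multiplicative.toAdd, Nat.card_zmod]
    simp only [Nat.card_congr Multiplicative.toAdd, Nat.card_zmod, Finset.prod_const,
      Finset.card_univ, Fintype.card_coe]
  rw [hcard2] at hcard1
  exact (Nat.pow_le_pow_iff_right hp.one_lt).mp hcard1
end

section
/- Let G = Π₁(𝒢, Γ) be the fundamental pro-p group of a proper finite graph of pro-p groups, U a closed normal subgroup of G, and Ũ the closed subgroup generated by all intersections g𝒢(v)g⁻¹ ∩ U over g ∈ G and vertices v. Then Ũ is normal in G and G/Ũ is the fundamental pro-p group of the graph of groups (𝒢_U, Γ) with vertex/edge groups 𝒢(m)U/U and the induced boundary monomorphisms. -/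
open scoped Topology

/-- Let `G = Π₁(𝒢, Γ)` be the fundamental pro-`p` group of a
proper finite graph of pro-`p` groups, `U` a closed normal subgroup of `G` and
`Ũ` the closed subgroup generated by all `g 𝒢(v) g⁻¹ ∩ U`. Then `Ũ` is normal
in `G` and `G/Ũ` is the fundamental pro-`p` group of the graph of groups
`(𝒢_U, Γ)` whose vertex and edge groups are the images `𝒢(m)U/U` and whose
stable letters are the images of the `t_e`. -/
theorem quotient_graph_of_groups (p : ℕ) (hp : p.Prime)
    (G : Type) [Group G] [TopologicalSpace G] [IsTopologicalGroup G]
    (hG : IsProPGroup p G)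
    (Γ : FinGraph) (hconn : Γ.Connected) (D : GraphOfProPGroups p G Γ)
    (U : Subgroup G) (hUnormal : U.Normal) (hUclosed : IsClosed (U : Set G)) :
    ∃ _ : ((⨆ (g : G), ⨆ v : Γ.V,
        ((D.Gv v).map (MulAut.conj g).toMonoidHom ⊓ U)).topologicalClosure).Normal,
      ∃ D' : GraphOfProPGroups p
        (G ⧸ (⨆ (g : G), ⨆ v : Γ.V,
          ((D.Gv v).map (MulAut.conj g).toMonoidHom ⊓ U)).topologicalClosure) Γ,
        (∀ v, D'.Gv v = (D.Gv v).map (QuotientGroup.mk'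
          ((⨆ (g : G), ⨆ v : Γ.V,
            ((D.Gv v).map (MulAut.conj g).toMonoidHom ⊓ U)).topologicalClosure))) ∧
        (∀ e, D'.Ge e = (D.Ge e).map (QuotientGroup.mk'
          ((⨆ (g : G), ⨆ v : Γ.V,
            ((D.Gv v).map (MulAut.conj g).toMonoidHom ⊓ U)).topologicalClosure))) ∧
        (∀ e, D'.t e = QuotientGroup.mk (D.t e)) := by
  haveI : CompactSpace G := hG.1
  set N₀ : Subgroup G := ⨆ (g : G), ⨆ v : Γ.V,
      ((D.Gv v).map (MulAut.conj g).toMonoidHom ⊓ U) with hN₀def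
  -- N₀ is normal
  have hconjle : ∀ h : G, N₀ ≤ N₀.comap (MulAut.conj h).toMonoidHom := by
    intro h
    refine iSup_le fun g => iSup_le fun v => ?_
    rintro x ⟨hx1, hx2⟩
    obtain ⟨z, hz, rfl⟩ := hx1
    refine Subgroup.mem_iSup_of_mem (h * g) (Subgroup.mem_iSup_of_mem v ⟨⟨z, hz, ?_⟩, ?_⟩)
    · simp [MulAut.conj_apply, mul_assoc]
    · exact hUnormal.conj_mem _ hx2 h
  haveI hN₀ : N₀.Normal := by
    constructor
    intro n hn h
    have := hconjle h hn
    simpa [MulAut.conj_apply] using this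
  set N : Subgroup G := N₀.topologicalClosure with hNdef
  haveI hNnormal : N.Normal := Subgroup.is_normal_topologicalClosure N₀
  have hNcompact : IsCompact (N : Set G) := N₀.isClosed_topologicalClosure.isCompact
  set π : G →* G ⧸ N := QuotientGroup.mk' N with hπdef
  have hπsurj : Function.Surjective π := QuotientGroup.mk'_surjective N
  -- the quotient graph of groups
  refine ⟨hNnormal, ?_, ?_⟩
  · refine
      { Gv := fun v => (D.Gv v).map π
        Ge := fun e => (D.Ge e).map π
        t := fun e => QuotientGroup.mk (D.t e)
        closedV := ?_
        le0 := fun e => Subgroup.map_mono (D.le0 e)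
        conj1 := ?_
        gen := ?_
        univ := ?_ }
    · -- closedness of vertex groups in the quotient
      intro v
      have : IsClosed (QuotientGroup.mk '' (D.Gv v : Set G)) :=
        QuotientGroup.isClosedMap_coe hNcompact _ (D.closedV v)
      rw [Subgroup.coe_map]; exact this
    · -- conjugation condition
      rintro e x hx
      obtain ⟨y, hy, rfl⟩ := hx
      refine ⟨(D.t e)⁻¹ * y * D.t e, D.conj1 e y hy, ?_⟩
      simp [map_mul, map_inv]
      rfl
    · -- topological generation
      have hK : ((⨆ v, (D.Gv v).map π) ⊔
          Subgroup.closure (Set.range fun e => (QuotientGroup.mk (D.t e) : G ⧸ N))) =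
          ((⨆ v, D.Gv v) ⊔ Subgroup.closure (Set.range D.t)).map π := by
        rw [Subgroup.map_sup, Subgroup.map_iSup, MonoidHom.map_closure]
        congr 2
        rw [← Set.range_comp]
        rfl
      show closure _ = Set.univ
      rw [hK, Subgroup.coe_map]
      have hdense : Dense (((⨆ v, D.Gv v) ⊔ Subgroup.closure (Set.range D.t) : Subgroup G) :
          Set G) := by
        rw [dense_iff_closure_eq]; exact D.gen
      rw [← dense_iff_closure_eq]
      exact hπsurj.denseRange.dense_image continuous_quot_mk hdense
    · -- universal property
      intro H _ _ _ _ hH φ τ hcomp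
      -- pull back the vertex maps to `G`
      set φ₀ : ∀ v, ↥(D.Gv v) →* H := fun v => (φ v).comp (π.subgroupMap (D.Gv v)) with hφ₀
      have key : ∀ (e : Γ.E) (x : G) (hx : x ∈ D.Ge e),
          φ₀ (Γ.d0 e) ⟨x, D.le0 e hx⟩ =
            τ e * φ₀ (Γ.d1 e) ⟨(D.t e)⁻¹ * x * D.t e, D.conj1 e x hx⟩ * (τ e)⁻¹ := by
        intro e x hx
        have h := hcomp e (π x) (Subgroup.mem_map_of_mem π hx)
        exact h
      obtain ⟨ψ, hψc, hψv, hψt⟩ := D.univ H hH φ₀ τ key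
      -- `N` is contained in the kernel of `ψ`
      have hkerclosed : IsClosed (ψ.ker : Set G) := by
        have : (ψ.ker : Set G) = ψ ⁻¹' {1} := by
          ext x; simp [MonoidHom.mem_ker]
        rw [this]
        exact (isClosed_discrete ({1} : Set H)).preimage hψc
      have hker : N ≤ ψ.ker := by
        refine Subgroup.topologicalClosure_minimal N₀ ?_ hkerclosed
        refine iSup_le fun g => iSup_le fun v => ?_
        rintro x ⟨hx1, hx2⟩
        obtain ⟨z, hz, rfl⟩ := hx1
        have hxN : (MulAut.conj g).toMonoidHom z ∈ N := by
          refine N₀.le_topologicalClosure ?_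
          exact Subgroup.mem_iSup_of_mem g (Subgroup.mem_iSup_of_mem v ⟨⟨z, hz, rfl⟩, hx2⟩)
        have hπz : π z = 1 := by
          have hπx : π ((MulAut.conj g).toMonoidHom z) = 1 := by
            rw [← QuotientGroup.ker_mk' N] at hxN
            exact hxN
          have : π g * π z * (π g)⁻¹ = 1 := by
            simpa [MulAut.conj_apply, map_mul, map_inv] using hπx
          calc π z = (π g)⁻¹ * (π g * π z * (π g)⁻¹) * π g := by group
            _ = 1 := by rw [this]; group
        have hψz : ψ z = 1 := by
          have := hψv v ⟨z, hz⟩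
          rw [this]
          have : ((π.subgroupMap (D.Gv v)) ⟨z, hz⟩ : ↥((D.Gv v).map π)) = 1 :=
            Subtype.ext (by simpa using hπz)
          simp [hφ₀, this]
        have : ψ ((MulAut.conj g).toMonoidHom z) = 1 := by
          simp [MulAut.conj_apply, map_mul, map_inv, hψz]
        simpa [MonoidHom.mem_ker] using this
      -- descend `ψ` to the quotient
      refine ⟨QuotientGroup.lift N ψ (fun x hx => hker hx), ?_, ?_, ?_⟩
      · exact (QuotientGroup.isQuotientMap_mk N).continuous_iff.mpr hψc
      · rintro v ⟨x', hx'⟩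
        obtain ⟨y, hy, rfl⟩ := hx'
        have h1 : QuotientGroup.lift N ψ (fun x hx => hker hx) (π y) = ψ y := rfl
        have h2 := hψv v ⟨y, hy⟩
        exact h1.trans h2
      · intro e
        have : QuotientGroup.lift N ψ (fun x hx => hker hx) (QuotientGroup.mk (D.t e)) =
            ψ (D.t e) := rfl
        rw [this, hψt]
  · exact ⟨fun v => rfl, fun e => rfl, fun e => rfl⟩
end
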